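/- arXiv:2512.13341 — 3 statements merged into one kernel-verified Lean document; each statement's English description precedes it below -/
import Mathlib

section
/- Let (X,T) be a Floyd–Auslander system. For any α ∈ Σ there exists an idempotent f ∈ J(X) such that f(L_α) is a single point (α,z) for some z with (α,z) ∈ L_α. -/
open Filter Topology

noncomputable section

def lam0 : ℝ → ℝ := fun x => x / 2
def lam1 : ℝ → ℝ := fun x => x
def lam2 : ℝ → ℝ := fun x => x / 2 + 1 / 2

/-- The defining data of a Floyd–Auslander construction: a sequence `p` of
integers `≥ 2` and, for each `n` and `j ∈ [p n]`, a map `lam n j` which is one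
of `lam0, lam1, lam2`. -/
structure FAData where
  p : ℕ → ℕ
  hp : ∀ n, 2 ≤ p n
  lam : (n : ℕ) → Fin (p n) → ℝ → ℝ
  hlam : ∀ n j, lam n j = lam0 ∨ lam n j = lam1 ∨ lam n j = lam2

namespace FAData

variable (D : FAData)

abbrev Sigma : Type := ∀ n, Fin (D.p n)

def fin0 (n : ℕ) : Fin (D.p n) := ⟨0, by have := D.hp n; omega⟩

def finTop (n : ℕ) : Fin (D.p n) := ⟨D.p n - 1, by have := D.hp n; omega⟩

/-- Addition mod `p n`, as an element of `Fin (p n)`. -/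
def modAdd (n : ℕ) (a b : ℕ) : Fin (D.p n) :=
  ⟨(a + b) % D.p n, Nat.mod_lt _ (by have := D.hp n; omega)⟩

def Q (n : ℕ) : Set (Fin (D.p n)) := {j | D.lam n j = lam1}
def H0 (n : ℕ) : Set (Fin (D.p n)) := {j | D.lam n j = lam0}
def H2 (n : ℕ) : Set (Fin (D.p n)) := {j | D.lam n j = lam2}

/-- The carry entering position `n` when adding `1̲ = 10^∞` to `α`. -/
def carryIn (α : D.Sigma) : ℕ → ℕ
  | 0 => 1
  | n + 1 => if D.p n ≤ (α n).val + carryIn α n then 1 else 0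

/-- The odometer add-one map `α ↦ α + 1̲`. -/
def addOne (α : D.Sigma) : D.Sigma := fun n => D.modAdd n (α n).val (D.carryIn α n)

/-- `lamComp α n = λ¹_{α₁} ∘ … ∘ λⁿ_{α_n}` (with `lamComp α 0 = id`). -/
def lamComp (α : D.Sigma) : ℕ → ℝ → ℝ
  | 0 => id
  | n + 1 => lamComp α n ∘ D.lam n (α n)

/-- The space `X ⊆ Σ × ℝ` of the Floyd–Auslander construction. -/
def X : Set (D.Sigma × ℝ) :=
  {q | ∃ z ∈ Set.Icc (0 : ℝ) 1, Tendsto (fun n => D.lamComp q.1 n z) atTop (𝓝 q.2)}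

/-- The fibre `L_α = ({α} × [0,1]) ∩ X`. -/
def Lfib (α : D.Sigma) : Set (D.Sigma × ℝ) := {q ∈ D.X | q.1 = α}

/-- A fibre `L_α` is maximal if the length (diameter) of `π₂(L_α)` is maximal. -/
def IsMaximalFiber (α : D.Sigma) : Prop :=
  ∀ β : D.Sigma, Metric.diam (Prod.snd '' D.Lfib β) ≤ Metric.diam (Prod.snd '' D.Lfib α)

/-- A convenient subset `𝒜 ⊆ Σ`. -/
def Convenient (𝒜 : Set D.Sigma) : Prop :=
  ¬𝒜.Countable ∧ (∀ α ∈ 𝒜, D.IsMaximalFiber α) ∧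
    ∃ q k k' : ℕ → ℕ, StrictMono q ∧ StrictMono k ∧ StrictMono k' ∧
      (∀ ℓ, ∃ ξ1 ξ2 : Fin (D.p (q ℓ)), ξ1 ∈ D.Q (q ℓ) ∧ ξ2 ∈ D.Q (q ℓ) ∧ ξ1 < ξ2 ∧
        ∀ α ∈ 𝒜, α (q ℓ) = ξ1) ∧
      (∀ ℓ, (D.H2 (k ℓ)).Nonempty ∧ ∃ ζ ∈ D.Q (k ℓ), ∀ α ∈ 𝒜, α (k ℓ) = ζ) ∧
      (∀ ℓ, (D.H0 (k' ℓ)).Nonempty ∧ ∃ ζ ∈ D.Q (k' ℓ), ∀ α ∈ 𝒜, α (k' ℓ) = ζ)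

/-- Condition (A). -/
def CondA : Prop :=
  ∃ ns : ℕ → ℕ, StrictMono ns ∧ ∀ ℓ, 2 ≤ (D.Q (ns ℓ)).ncard ∧
    ∃ a0 a1 : Fin (D.p (ns ℓ)), a0 ∈ D.Q (ns ℓ) ∧ a1 ∈ D.Q (ns ℓ) ∧ a0 ≠ a1 ∧
      ∃ Δ : Fin (D.p (ns ℓ)),
        D.modAdd (ns ℓ) a0.val Δ.val ∈ D.H0 (ns ℓ) ∧
        D.modAdd (ns ℓ) a1.val Δ.val ∈ D.H2 (ns ℓ)

/-- Condition (B). -/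
def CondB : Prop :=
  ∃ ns : ℕ → ℕ, StrictMono ns ∧ ∀ ℓ, 2 ≤ (D.Q (ns ℓ)).ncard ∧
    ∀ a0 a1 : Fin (D.p (ns ℓ)), a0 ∈ D.Q (ns ℓ) → a1 ∈ D.Q (ns ℓ) → a0 ≠ a1 →
      ∀ j : Fin (D.p (ns ℓ)),
        (D.modAdd (ns ℓ) a0.val j.val ∈ D.H0 (ns ℓ) ↔
          D.modAdd (ns ℓ) a1.val j.val ∈ D.H0 (ns ℓ)) ∧
        (D.modAdd (ns ℓ) a0.val j.val ∈ D.H2 (ns ℓ) ↔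
          D.modAdd (ns ℓ) a1.val j.val ∈ D.H2 (ns ℓ))

/-- Condition (C). -/
def CondC : Prop :=
  ∃ ns : ℕ → ℕ, StrictMono ns ∧ ∀ ℓ, 2 ≤ (D.Q (ns ℓ)).ncard ∧
    ∃ a0 a1 : Fin (D.p (ns ℓ)), a0 ∈ D.Q (ns ℓ) ∧ a1 ∈ D.Q (ns ℓ) ∧ a0 ≠ a1 ∧
      ∃ Δ : Fin (D.p (ns ℓ)), ∃ h : a0.val + Δ.val < D.p (ns ℓ),
        (⟨a0.val + Δ.val, h⟩ : Fin (D.p (ns ℓ))) ∈ D.Q (ns ℓ) ∧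
        D.modAdd (ns ℓ) a1.val Δ.val ∈ D.H0 (ns ℓ) ∪ D.H2 (ns ℓ)

end FAData

/-- A Floyd–Auslander system: the data of the construction together with the
skew-product map `T`, the continuity conditions (i) and the condition (ii) that
`Q n = ∅` for at most finitely many `n`. -/
structure FASystem extends FAData where
  T : toFAData.X → toFAData.X
  hT : ∀ (α : toFAData.Sigma) (z y y' : ℝ), z ∈ Set.Icc (0 : ℝ) 1 →
    Tendsto (fun n => toFAData.lamComp α n z) atTop (𝓝 y) →
    Tendsto (fun n => toFAData.lamComp (toFAData.addOne α) n z) atTop (𝓝 y') →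
    ∀ hq : (α, y) ∈ toFAData.X,
      (T ⟨(α, y), hq⟩ : toFAData.Sigma × ℝ) = (toFAData.addOne α, y')
  infLeft : {n : ℕ | toFAData.lam n (toFAData.fin0 n) = lam0 ∨
      toFAData.lam n (toFAData.fin0 n) = lam2}.Infinite
  infRight : {n : ℕ | toFAData.lam n (toFAData.finTop n) = lam0 ∨
      toFAData.lam n (toFAData.finTop n) = lam2}.Infinite
  Qfin : {n : ℕ | toFAData.Q n = ∅}.Finite

namespace FASystem

variable (S : FASystem)

/-- The (forward) Ellis semigroup `E(X)`: the closure of `{Tⁿ : n ≥ 1}` in `X^X`. -/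
def Ellis : Set (S.toFAData.X → S.toFAData.X) :=
  closure (Set.range fun n : ℕ => S.T^[n + 1])

/-- The set of idempotents `J(X)` of the Ellis semigroup. -/
def J : Set (S.toFAData.X → S.toFAData.X) := {f | f ∈ S.Ellis ∧ f ∘ f = f}

/-- The set of minimal idempotents `J^min(X)` (minimal for `e ≤ f ↔ e = e ∘ f`). -/
def Jmin : Set (S.toFAData.X → S.toFAData.X) :=
  {f | f ∈ S.J ∧ ∀ e ∈ S.J, e = e ∘ f → e = f}

/-- `(X,T)` is minimal: every forward orbit is dense. -/
def Minimal : Prop := ∀ x : S.toFAData.X, Dense (Set.range fun n : ℕ => S.T^[n] x)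

/-- Property (∗). -/
def PropertyStar : Prop :=
  ∃ a ∈ Set.Ioo (0 : ℝ) 1, ∃ 𝒜 : Set S.toFAData.Sigma, S.toFAData.Convenient 𝒜 ∧
    ((∀ B ⊆ 𝒜, ∃ f ∈ S.J, ∃ B1 B2 : Set S.toFAData.Sigma, B1 ∪ B2 = B ∧ Disjoint B1 B2 ∧
        (∀ α ∈ 𝒜 \ B, ∃ b ∈ Set.Icc (0 : ℝ) a, ∀ q : S.toFAData.X,
          (q : S.toFAData.Sigma × ℝ).1 = α → (f q : S.toFAData.Sigma × ℝ) = (α, b)) ∧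
        (∀ α ∈ B1, ∃ c : ℝ, a < c ∧ ∀ q : S.toFAData.X,
          (q : S.toFAData.Sigma × ℝ).1 = α → (f q : S.toFAData.Sigma × ℝ) = (α, c)) ∧
        (∀ α ∈ B2, ∀ q : S.toFAData.X, (q : S.toFAData.Sigma × ℝ).1 = α → f q = q)) ∨
     (∀ B ⊆ 𝒜, ∃ f ∈ S.J, ∃ B1 B2 : Set S.toFAData.Sigma, B1 ∪ B2 = B ∧ Disjoint B1 B2 ∧
        (∀ α ∈ 𝒜 \ B, ∃ b ∈ Set.Icc a (1 : ℝ), ∀ q : S.toFAData.X,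
          (q : S.toFAData.Sigma × ℝ).1 = α → (f q : S.toFAData.Sigma × ℝ) = (α, b)) ∧
        (∀ α ∈ B1, ∃ c : ℝ, c < a ∧ ∀ q : S.toFAData.X,
          (q : S.toFAData.Sigma × ℝ).1 = α → (f q : S.toFAData.Sigma × ℝ) = (α, c)) ∧
        (∀ α ∈ B2, ∀ q : S.toFAData.X, (q : S.toFAData.Sigma × ℝ).1 = α → f q = q)))

end FASystem

/-!
Every `λ_j^n` is affine with slope `1` or `1/2`, so `λ_γ^n(z) = u_n(γ) + c_n(γ) z` and the fibre
`L_γ` is the segment over `[u(γ), u(γ) + c(γ)]`, `u` and `c` being the limits of the intercepts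
and slopes. Given `m`, steer `α + k·1̲` into a cylinder which agrees with `α` on the first `m` digits
and is followed by enough digits `0`: by (i) infinitely many of them carry a contracting map, so
`T^k` maps `L_α` into a fibre close to `L_α`, onto a segment of length at most `2⁻ᵐ`. By
compactness of `X^X` some `f ∈ E(X)` then collapses `L_α` to a point of `L_α`. These `f` form a
closed subsemigroup of `E(X)`, which has an idempotent by the Ellis–Numakura lemma.

That `E(X)` is a semigroup needs `T` to be continuous. Where `α + 1̲` involves finitely many
carries, `T` is an affine map between fibres on a neighbourhood; where every digit carries,
`α + 1̲ = 0^∞` and its fibre is a point, again by (i).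
-/

open PiNat

theorem isLocallyConstant_of_forall_cylinder {E : ℕ → Type*} [∀ n, TopologicalSpace (E n)]
    [∀ n, DiscreteTopology (E n)] {Y : Type*} {f : (∀ n, E n) → Y}
    (h : ∀ x, ∃ n, ∀ y ∈ cylinder x n, f y = f x) : IsLocallyConstant f :=
  (IsLocallyConstant.iff_eventually_eq f).2 fun x =>
    let ⟨n, hn⟩ := h x
    Filter.mem_of_superset ((isOpen_cylinder _ x n).mem_nhds (self_mem_cylinder x n)) hn

theorem exists_idempotent_of_isCompact_of_comp_mem {Y : Type*} [TopologicalSpace Y] [T2Space Y]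
    {K : Set (Y → Y)} (hne : K.Nonempty) (hK : IsCompact K)
    (hcomp : ∀ f ∈ K, ∀ g ∈ K, f ∘ g ∈ K) : ∃ f ∈ K, f ∘ f = f :=
  letI : TopologicalSpace (Function.End Y) := inferInstanceAs (TopologicalSpace (Y → Y))
  haveI : T2Space (Function.End Y) := inferInstanceAs (T2Space (Y → Y))
  exists_idempotent_in_compact_subsemigroup (M := Function.End Y)
    (fun r => continuous_pi fun y => continuous_apply (r y)) K hne hK hcomp

namespace FAData

variable (D : FAData)

theorem lam0_ne_lam1 : lam0 ≠ lam1 := fun h => by simpa [lam0, lam1] using congrFun h 1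

theorem lam2_ne_lam1 : lam2 ≠ lam1 := fun h => by simpa [lam2, lam1] using congrFun h 0

open Classical in
def lamSlope (n : ℕ) (j : Fin (D.p n)) : ℝ := if D.lam n j = lam1 then 1 else 1 / 2

theorem lam_apply (n : ℕ) (j : Fin (D.p n)) (x : ℝ) :
    D.lam n j x = D.lam n j 0 + D.lamSlope n j * x := by
  rcases D.hlam n j with h | h | h <;>
    simp [lamSlope, h, lam0, lam1, lam2, lam0_ne_lam1, lam2_ne_lam1] <;> ring

theorem lamSlope_pos (n : ℕ) (j : Fin (D.p n)) : 0 < D.lamSlope n j := by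
  unfold lamSlope; split <;> norm_num

theorem lamSlope_le_one (n : ℕ) (j : Fin (D.p n)) : D.lamSlope n j ≤ 1 := by
  unfold lamSlope; split <;> norm_num

theorem lamSlope_eq_half {n : ℕ} {j : Fin (D.p n)} (h : D.lam n j = lam0 ∨ D.lam n j = lam2) :
    D.lamSlope n j = 1 / 2 := by
  rcases h with h | h <;> simp [lamSlope, h, lam0_ne_lam1, lam2_ne_lam1]

theorem lam_zero_nonneg (n : ℕ) (j : Fin (D.p n)) : 0 ≤ D.lam n j 0 := by
  rcases D.hlam n j with h | h | h <;> norm_num [h, lam0, lam1, lam2]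

theorem lam_zero_add_lamSlope_le_one (n : ℕ) (j : Fin (D.p n)) :
    D.lam n j 0 + D.lamSlope n j ≤ 1 := by
  rcases D.hlam n j with h | h | h <;>
    norm_num [lamSlope, h, lam0, lam1, lam2, lam0_ne_lam1, lam2_ne_lam1]

def slope (γ : D.Sigma) (n : ℕ) : ℝ := ∏ i ∈ Finset.range n, D.lamSlope i (γ i)

def offset (γ : D.Sigma) (n : ℕ) : ℝ := D.lamComp γ n 0

section Affine

variable {D} (γ : D.Sigma)

@[simp] theorem slope_zero : D.slope γ 0 = 1 := rfl

@[simp] theorem offset_zero : D.offset γ 0 = 0 := rfl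

theorem slope_succ (n : ℕ) : D.slope γ (n + 1) = D.slope γ n * D.lamSlope n (γ n) :=
  Finset.prod_range_succ _ _

theorem slope_pos (n : ℕ) : 0 < D.slope γ n :=
  Finset.prod_pos fun i _ => D.lamSlope_pos i (γ i)

theorem lamComp_apply (n : ℕ) (x : ℝ) :
    D.lamComp γ n x = D.offset γ n + D.slope γ n * x := by
  induction n generalizing x with
  | zero => simp [lamComp]
  | succ n ih =>
    simp only [offset, lamComp, Function.comp_apply] at ih ⊢
    rw [ih, ih (D.lam n (γ n) 0), D.lam_apply n (γ n) x, slope_succ]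
    ring

theorem offset_succ (n : ℕ) :
    D.offset γ (n + 1) = D.offset γ n + D.slope γ n * D.lam n (γ n) 0 :=
  D.lamComp_apply γ n _

theorem slope_antitone : Antitone (D.slope γ) :=
  antitone_nat_of_succ_le fun n => by
    rw [slope_succ]
    exact mul_le_of_le_one_right (slope_pos γ n).le (D.lamSlope_le_one n (γ n))

theorem offset_monotone : Monotone (D.offset γ) :=
  monotone_nat_of_le_succ fun n => by
    rw [offset_succ]
    have := mul_nonneg (slope_pos γ n).le (D.lam_zero_nonneg n (γ n))
    linarith

theorem offset_add_slope_antitone : Antitone fun n => D.offset γ n + D.slope γ n :=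
  antitone_nat_of_succ_le fun n => by
    rw [offset_succ, slope_succ]
    nlinarith [slope_pos γ n, D.lam_zero_add_lamSlope_le_one n (γ n)]

theorem offset_le_offset_add_slope (n m : ℕ) : D.offset γ n ≤ D.offset γ m + D.slope γ m := by
  rcases le_total n m with h | h
  · linarith [offset_monotone γ h, slope_pos γ m]
  · linarith [offset_add_slope_antitone γ h, slope_pos γ n]

def limOffset : ℝ := ⨆ n, D.offset γ n

def limSlope : ℝ := ⨅ n, D.slope γ n

/-- The affine map `z ↦ lim_n λ_γ^n(z)`, whose image of `[0,1]` is the fibre `L_γ`. -/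
def limMap (z : ℝ) : ℝ := D.limOffset γ + D.limSlope γ * z

theorem bddAbove_range_offset : BddAbove (Set.range (D.offset γ)) :=
  ⟨1, by rintro _ ⟨n, rfl⟩; simpa using offset_le_offset_add_slope γ n 0⟩

theorem bddBelow_range_slope : BddBelow (Set.range (D.slope γ)) :=
  ⟨0, by rintro _ ⟨n, rfl⟩; exact (slope_pos γ n).le⟩

theorem tendsto_offset : Tendsto (D.offset γ) atTop (𝓝 (D.limOffset γ)) :=
  tendsto_atTop_ciSup (offset_monotone γ) (bddAbove_range_offset γ)

theorem tendsto_slope : Tendsto (D.slope γ) atTop (𝓝 (D.limSlope γ)) :=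
  tendsto_atTop_ciInf (slope_antitone γ) (bddBelow_range_slope γ)

theorem tendsto_lamComp (z : ℝ) :
    Tendsto (fun n => D.lamComp γ n z) atTop (𝓝 (D.limMap γ z)) := by
  simp_rw [lamComp_apply]
  exact (tendsto_offset γ).add ((tendsto_slope γ).mul_const z)

theorem offset_le_limOffset (n : ℕ) : D.offset γ n ≤ D.limOffset γ :=
  le_ciSup (bddAbove_range_offset γ) n

theorem limSlope_le_slope (n : ℕ) : D.limSlope γ ≤ D.slope γ n :=
  ciInf_le (bddBelow_range_slope γ) n

theorem limSlope_nonneg : 0 ≤ D.limSlope γ :=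
  le_ciInf fun n => (slope_pos γ n).le

theorem limOffset_add_limSlope_le (n : ℕ) :
    D.limOffset γ + D.limSlope γ ≤ D.offset γ n + D.slope γ n :=
  (offset_add_slope_antitone γ).le_of_tendsto ((tendsto_offset γ).add (tendsto_slope γ)) n

theorem limMap_mem_Icc {z : ℝ} (hz : z ∈ Set.Icc (0 : ℝ) 1) (n : ℕ) :
    D.limMap γ z ∈ Set.Icc (D.offset γ n) (D.offset γ n + D.slope γ n) := by
  have h₁ := offset_le_limOffset γ n
  have h₂ := limOffset_add_limSlope_le γ n
  have h₃ := limSlope_nonneg γ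
  unfold limMap
  constructor <;> nlinarith [hz.1, hz.2]

theorem abs_limMap_sub_limMap_le {z z' : ℝ} (hz : z ∈ Set.Icc (0 : ℝ) 1)
    (hz' : z' ∈ Set.Icc (0 : ℝ) 1) : |D.limMap γ z - D.limMap γ z'| ≤ D.limSlope γ := by
  have h : D.limMap γ z - D.limMap γ z' = D.limSlope γ * (z - z') := by unfold limMap; ring
  rw [h, abs_mul, abs_of_nonneg (limSlope_nonneg γ)]
  exact mul_le_of_le_one_right (limSlope_nonneg γ)
    (abs_sub_le_of_nonneg_of_le hz.1 hz.2 hz'.1 hz'.2)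

end Affine

variable {D}

theorem limMap_mem_X (γ : D.Sigma) {z : ℝ} (hz : z ∈ Set.Icc (0 : ℝ) 1) :
    (γ, D.limMap γ z) ∈ D.X :=
  ⟨z, hz, D.tendsto_lamComp γ z⟩

theorem exists_limMap_eq_of_mem_X {q : D.Sigma × ℝ} (hq : q ∈ D.X) :
    ∃ z ∈ Set.Icc (0 : ℝ) 1, D.limMap q.1 z = q.2 :=
  let ⟨z, hz, h⟩ := hq
  ⟨z, hz, tendsto_nhds_unique (D.tendsto_lamComp q.1 z) h⟩

theorem exists_limMap_eq {γ : D.Sigma} {y : ℝ} (h₁ : D.limOffset γ ≤ y)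
    (h₂ : y ≤ D.limOffset γ + D.limSlope γ) : ∃ z ∈ Set.Icc (0 : ℝ) 1, D.limMap γ z = y := by
  rcases (D.limSlope_nonneg γ).eq_or_lt with h | h
  · exact ⟨0, by simp, by simp only [limMap]; linarith⟩
  · refine ⟨(y - D.limOffset γ) / D.limSlope γ, ⟨by positivity, ?_⟩, ?_⟩
    · rw [div_le_one h]; linarith
    · simp only [limMap]; field_simp; ring

theorem mem_X_iff {γ : D.Sigma} {y : ℝ} :
    (γ, y) ∈ D.X ↔ ∀ n, y ∈ Set.Icc (D.offset γ n) (D.offset γ n + D.slope γ n) := by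
  refine ⟨fun h n => ?_, fun h => ?_⟩
  · obtain ⟨z, hz, hzy⟩ := exists_limMap_eq_of_mem_X h
    exact (show D.limMap γ z = y from hzy) ▸ D.limMap_mem_Icc γ hz n
  · obtain ⟨z, hz, rfl⟩ := exists_limMap_eq (ciSup_le fun n => (h n).1)
      (ge_of_tendsto ((D.tendsto_offset γ).add (D.tendsto_slope γ)) (Eventually.of_forall
        fun n => (h n).2))
    exact limMap_mem_X γ hz

/-- If `γ'` and `γ` have the same digits from `N` on, then `λ_{γ'}^{N+k}` is `λ_γ^{N+k}` followed
by the affine bijection from `λ_γ^N([0,1])` onto `λ_{γ'}^N([0,1])`. -/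
theorem lamComp_eq_of_forall_le_eq {γ γ' : D.Sigma} {N : ℕ} (h : ∀ i, N ≤ i → γ' i = γ i)
    (k : ℕ) (x : ℝ) :
    D.lamComp γ' (N + k) x = D.offset γ' N +
      D.slope γ' N * ((D.lamComp γ (N + k) x - D.offset γ N) / D.slope γ N) := by
  induction k generalizing x with
  | zero =>
    have := (D.slope_pos γ N).ne'
    rw [Nat.add_zero, D.lamComp_apply, D.lamComp_apply]
    field_simp
    ring
  | succ k ih =>
    rw [← Nat.add_assoc]
    show D.lamComp γ' (N + k) (D.lam (N + k) (γ' (N + k)) x) = D.offset γ' N + D.slope γ' N *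
      ((D.lamComp γ (N + k) (D.lam (N + k) (γ (N + k)) x) - D.offset γ N) / D.slope γ N)
    rw [h (N + k) (Nat.le_add_right N k), ih]

theorem limMap_eq_of_forall_le_eq {γ γ' : D.Sigma} {N : ℕ} (h : ∀ i, N ≤ i → γ' i = γ i)
    (z : ℝ) : D.limMap γ' z = D.offset γ' N +
      D.slope γ' N * ((D.limMap γ z - D.offset γ N) / D.slope γ N) := by
  have hN : Tendsto (fun k => N + k) atTop atTop := by
    simpa only [Nat.add_comm] using tendsto_add_atTop_nat N
  refine tendsto_nhds_unique ((D.tendsto_lamComp γ' z).comp hN) ?_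
  simp_rw [Function.comp_def, lamComp_eq_of_forall_le_eq h]
  exact ((((D.tendsto_lamComp γ z).comp hN).sub_const _).div_const _).const_mul _ |>.const_add _

theorem limSlope_eq_zero_of_frequently {γ : D.Sigma}
    (h : ∃ᶠ n in atTop, D.lamSlope n (γ n) = 1 / 2) : D.limSlope γ = 0 := by
  have hL := tendsto_nhds_unique_of_frequently_eq
    ((D.tendsto_slope γ).comp (tendsto_add_atTop_nat 1))
    ((D.tendsto_slope γ).mul_const (1 / 2 : ℝ))
    (h.mono fun n hn => by simp only [Function.comp_apply, D.slope_succ, hn])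
  linarith

theorem lamComp_congr {γ γ' : D.Sigma} {n : ℕ} (h : γ' ∈ cylinder γ n) :
    D.lamComp γ' n = D.lamComp γ n := by
  induction n with
  | zero => rfl
  | succ n ih =>
    simp only [lamComp, ih (cylinder_anti γ n.le_succ h), h n n.lt_succ_self]

theorem offset_congr {γ γ' : D.Sigma} {n : ℕ} (h : γ' ∈ cylinder γ n) :
    D.offset γ' n = D.offset γ n := by
  rw [offset, offset, lamComp_congr h]

theorem slope_congr {γ γ' : D.Sigma} {n : ℕ} (h : γ' ∈ cylinder γ n) :
    D.slope γ' n = D.slope γ n :=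
  Finset.prod_congr rfl fun i hi => by rw [h i (Finset.mem_range.1 hi)]

theorem continuous_offset (n : ℕ) : Continuous fun γ : D.Sigma => D.offset γ n :=
  (isLocallyConstant_of_forall_cylinder fun _ => ⟨n, fun _ => offset_congr⟩).continuous

theorem continuous_slope (n : ℕ) : Continuous fun γ : D.Sigma => D.slope γ n :=
  (isLocallyConstant_of_forall_cylinder fun _ => ⟨n, fun _ => slope_congr⟩).continuous

theorem isClosed_X : IsClosed D.X := by
  have hX : D.X = ⋂ n, {q : D.Sigma × ℝ |
      D.offset q.1 n ≤ q.2 ∧ q.2 ≤ D.offset q.1 n + D.slope q.1 n} := by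
    ext q; simpa using mem_X_iff (γ := q.1) (y := q.2)
  rw [hX]
  refine isClosed_iInter fun n => ?_
  have ho := (continuous_offset n).comp (continuous_fst (X := D.Sigma) (Y := ℝ))
  have hs := (continuous_slope n).comp (continuous_fst (X := D.Sigma) (Y := ℝ))
  exact (isClosed_le ho continuous_snd).inter (isClosed_le continuous_snd (ho.add hs))

instance : CompactSpace D.X := by
  have hX : D.X ⊆ Set.univ ×ˢ Set.Icc (0 : ℝ) 1 := fun q hq =>
    ⟨trivial, by simpa using mem_X_iff.1 hq 0⟩
  exact isCompact_iff_compactSpace.1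
    ((isCompact_univ.prod isCompact_Icc).of_isClosed_subset isClosed_X hX)

theorem carryIn_le_one (γ : D.Sigma) (n : ℕ) : D.carryIn γ n ≤ 1 := by
  cases n with
  | zero => simp [carryIn]
  | succ n => unfold carryIn; split <;> norm_num

theorem carryIn_congr {γ γ' : D.Sigma} {n : ℕ} (h : γ' ∈ cylinder γ n) :
    D.carryIn γ' n = D.carryIn γ n := by
  induction n with
  | zero => rfl
  | succ n ih => simp only [carryIn, ih (cylinder_anti γ n.le_succ h), h n n.lt_succ_self]

theorem addOne_mem_cylinder {γ γ' : D.Sigma} {n : ℕ} (h : γ' ∈ cylinder γ n) :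
    D.addOne γ' ∈ cylinder (D.addOne γ) n := fun i hi => by
  simp only [addOne, h i hi, carryIn_congr (cylinder_anti γ hi.le h)]

theorem continuous_addOne : Continuous D.addOne :=
  continuous_pi fun n => (isLocallyConstant_of_forall_cylinder fun _ =>
    ⟨n + 1, fun _ h => addOne_mem_cylinder h n n.lt_succ_self⟩).continuous

theorem carryIn_eq_zero_of_le {γ : D.Sigma} {N n : ℕ} (h : D.carryIn γ N = 0) (hn : N ≤ n) :
    D.carryIn γ n = 0 := by
  induction n, hn using Nat.le_induction with
  | base => exact h
  | succ n _ ih => simp [carryIn, ih, (γ n).isLt]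

theorem addOne_eq_of_carryIn_eq_zero {γ : D.Sigma} {N n : ℕ} (h : D.carryIn γ N = 0)
    (hn : N ≤ n) : D.addOne γ n = γ n :=
  Fin.ext <| by simp [addOne, modAdd, carryIn_eq_zero_of_le h hn, Nat.mod_eq_of_lt (γ n).isLt]

theorem addOne_eq_fin0 {γ : D.Sigma} (h : ∀ n, D.carryIn γ n = 1) (n : ℕ) :
    D.addOne γ n = D.fin0 n := by
  have hp := D.hp n
  have htop : (γ n).val + 1 = D.p n := by
    have := h (n + 1)
    simp only [carryIn, h n] at this
    split_ifs at this with hle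
    · exact le_antisymm (γ n).isLt hle
  exact Fin.ext <| by simp [addOne, modAdd, fin0, h n, htop]

def weight (D : FAData) (m : ℕ) : ℕ := ∏ i ∈ Finset.range m, D.p i

def value (γ : D.Sigma) (m : ℕ) : ℕ := ∑ i ∈ Finset.range m, (γ i).val * D.weight i

theorem weight_pos (m : ℕ) : 0 < D.weight m :=
  Finset.prod_pos fun i _ => by have := D.hp i; omega

theorem weight_succ (m : ℕ) : D.weight (m + 1) = D.weight m * D.p m :=
  Finset.prod_range_succ _ _

theorem value_succ (γ : D.Sigma) (m : ℕ) :
    D.value γ (m + 1) = D.value γ m + (γ m).val * D.weight m :=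
  Finset.sum_range_succ _ _

theorem value_lt (γ : D.Sigma) (m : ℕ) : D.value γ m < D.weight m := by
  induction m with
  | zero => simp [value, weight]
  | succ m ih =>
    rw [value_succ, weight_succ]
    nlinarith [(γ m).isLt]

theorem mem_cylinder_of_value_eq {γ γ' : D.Sigma} {m : ℕ} (h : D.value γ' m = D.value γ m) :
    γ' ∈ cylinder γ m := by
  induction m with
  | zero => simp
  | succ m ih =>
    rw [value_succ, value_succ] at h
    have hw := weight_pos (D := D) m
    have hdiv := congrArg (· / D.weight m) h
    have hmod := congrArg (· % D.weight m) h
    simp only [Nat.add_mul_div_right _ _ hw, Nat.add_mul_mod_self_right,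
      Nat.div_eq_of_lt (value_lt _ m), Nat.mod_eq_of_lt (value_lt _ m), zero_add] at hdiv hmod
    intro i hi
    rcases Nat.lt_succ_iff_lt_or_eq.1 hi with hi | rfl
    · exact ih hmod i hi
    · exact Fin.ext hdiv

theorem value_addOne_add_carryIn (γ : D.Sigma) (m : ℕ) :
    D.value (D.addOne γ) m + D.carryIn γ m * D.weight m = D.value γ m + 1 := by
  induction m with
  | zero => simp [value, weight, carryIn]
  | succ m ih =>
    have hdig : (D.addOne γ m).val = ((γ m).val + D.carryIn γ m) % D.p m := rfl
    have hc := carryIn_le_one γ m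
    have hlt := (γ m).isLt
    rw [value_succ, value_succ, weight_succ, hdig]
    simp only [carryIn]
    split_ifs with hcarry
    · rw [Nat.mod_eq_sub_mod hcarry, Nat.mod_eq_of_lt (by omega)]
      have : ((γ m).val + D.carryIn γ m - D.p m) * D.weight m + D.weight m * D.p m =
          ((γ m).val + D.carryIn γ m) * D.weight m := by
        rw [mul_comm (D.weight m), ← add_mul, Nat.sub_add_cancel hcarry]
      nlinarith
    · rw [Nat.mod_eq_of_lt (by omega)]
      nlinarith

theorem value_iterate_addOne (γ : D.Sigma) (m k : ℕ) :
    D.value (D.addOne^[k] γ) m = (D.value γ m + k) % D.weight m := by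
  induction k with
  | zero => simp [Nat.mod_eq_of_lt (value_lt γ m)]
  | succ k ih =>
    have h := value_addOne_add_carryIn (D.addOne^[k] γ) m
    have hlt := value_lt (D.addOne^[k + 1] γ) m
    rw [Function.iterate_succ_apply'] at hlt ⊢
    rw [← Nat.add_assoc, ← Nat.mod_add_mod, ← ih]
    rcases Nat.le_one_iff_eq_zero_or_eq_one.1 (carryIn_le_one (D.addOne^[k] γ) m) with hc | hc <;>
      rw [hc] at h
    · rw [← h, zero_mul, add_zero, Nat.mod_eq_of_lt hlt]
    · rw [← h, one_mul, Nat.add_mod_right, Nat.mod_eq_of_lt hlt]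

theorem exists_iterate_addOne_mem_cylinder (γ target : D.Sigma) (m : ℕ) :
    ∃ k, 1 ≤ k ∧ D.addOne^[k] γ ∈ cylinder target m := by
  have h₁ := value_lt γ m
  have h₂ := value_lt target m
  refine ⟨D.value target m + (D.weight m - D.value γ m), by omega,
    mem_cylinder_of_value_eq ?_⟩
  rw [value_iterate_addOne, show D.value γ m + (D.value target m + (D.weight m - D.value γ m)) =
    D.value target m + D.weight m by omega, Nat.add_mod_right, Nat.mod_eq_of_lt h₂]

end FAData

namespace FASystem

variable (S : FASystem)

theorem limSlope_eq_zero_of_eventually_eq_fin0 {γ : S.Sigma}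
    (h : ∀ᶠ n in atTop, γ n = S.fin0 n) : S.limSlope γ = 0 :=
  S.limSlope_eq_zero_of_frequently <|
    ((Nat.frequently_atTop_iff_infinite.2 S.infLeft).and_eventually h).mono fun n hn => by
      rw [hn.2]; exact S.lamSlope_eq_half hn.1

def param (q : S.X) : ℝ := (S.exists_limMap_eq_of_mem_X q.2).choose

theorem param_mem (q : S.X) : S.param q ∈ Set.Icc (0 : ℝ) 1 :=
  (S.exists_limMap_eq_of_mem_X q.2).choose_spec.1

theorem limMap_param (q : S.X) : S.limMap q.1.1 (S.param q) = q.1.2 :=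
  (S.exists_limMap_eq_of_mem_X q.2).choose_spec.2

theorem coe_T {q : S.X} {z : ℝ} (hz : z ∈ Set.Icc (0 : ℝ) 1) (hq : S.limMap q.1.1 z = q.1.2) :
    (S.T q : S.Sigma × ℝ) = (S.addOne q.1.1, S.limMap (S.addOne q.1.1) z) := by
  obtain ⟨⟨γ, y⟩, hγy⟩ := q
  exact S.hT γ z y _ hz ((show S.limMap γ z = y from hq) ▸ S.tendsto_lamComp γ z)
    (S.tendsto_lamComp _ z) hγy

theorem coe_iterate_T {q : S.X} {z : ℝ} (hz : z ∈ Set.Icc (0 : ℝ) 1)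
    (hq : S.limMap q.1.1 z = q.1.2) (k : ℕ) :
    (S.T^[k] q : S.Sigma × ℝ) = (S.addOne^[k] q.1.1, S.limMap (S.addOne^[k] q.1.1) z) := by
  induction k with
  | zero => exact Prod.ext rfl hq.symm
  | succ k ih =>
    rw [Function.iterate_succ_apply', Function.iterate_succ_apply',
      S.coe_T hz (by rw [ih]), ih]

theorem cylinder_preimage_mem_nhds (q : S.X) (n : ℕ) :
    {q' : S.X | q'.1.1 ∈ cylinder q.1.1 n} ∈ 𝓝 q :=
  ((isOpen_cylinder _ _ n).preimage (continuous_fst.comp continuous_subtype_val)).mem_nhds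
    (self_mem_cylinder _ n)

/-- The height coordinate of `T q`. -/
def nextHeight (q : S.X) : ℝ := S.limMap (S.addOne q.1.1) (S.param q)

theorem nextHeight_mem_Icc {q q' : S.X} {n : ℕ} (h : q'.1.1 ∈ cylinder q.1.1 n) :
    S.nextHeight q' ∈ Set.Icc (S.offset (S.addOne q.1.1) n)
      (S.offset (S.addOne q.1.1) n + S.slope (S.addOne q.1.1) n) := by
  have h' := FAData.addOne_mem_cylinder h
  rw [← FAData.offset_congr h', ← FAData.slope_congr h']
  exact S.limMap_mem_Icc _ (S.param_mem q') n

theorem nextHeight_eventuallyEq_of_carryIn_eq_zero {q : S.X} {N : ℕ}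
    (hN : S.carryIn q.1.1 N = 0) :
    S.nextHeight =ᶠ[𝓝 q] fun q' => S.offset (S.addOne q.1.1) N +
      S.slope (S.addOne q.1.1) N * ((q'.1.2 - S.offset q.1.1 N) / S.slope q.1.1 N) := by
  filter_upwards [S.cylinder_preimage_mem_nhds q N] with q' hq'
  have hcarry : S.carryIn q'.1.1 N = 0 := by rw [FAData.carryIn_congr hq', hN]
  have h' := FAData.addOne_mem_cylinder hq'
  rw [nextHeight, FAData.limMap_eq_of_forall_le_eq
      (fun i hi => FAData.addOne_eq_of_carryIn_eq_zero hcarry hi),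
    limMap_param, FAData.offset_congr h', FAData.slope_congr h', FAData.offset_congr hq',
    FAData.slope_congr hq']

/-- With an infinite carry, `q.1 + 1̲ = 0^∞`, whose fibre is a single point by (i). -/
theorem continuousAt_nextHeight_of_forall_carryIn_eq_one {q : S.X}
    (h : ∀ n, S.carryIn q.1.1 n = 1) : ContinuousAt S.nextHeight q := by
  have hzero : S.limSlope (S.addOne q.1.1) = 0 :=
    S.limSlope_eq_zero_of_eventually_eq_fin0 (Eventually.of_forall (FAData.addOne_eq_fin0 h))
  refine Metric.tendsto_nhds.2 fun ε hε => ?_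
  obtain ⟨N, hN⟩ := ((S.tendsto_slope _).eventually (gt_mem_nhds (hzero ▸ hε))).exists
  filter_upwards [S.cylinder_preimage_mem_nhds q N] with q' hq'
  have h₁ := S.nextHeight_mem_Icc hq'
  have h₂ := S.nextHeight_mem_Icc (self_mem_cylinder q.1.1 N)
  rw [Real.dist_eq, abs_sub_lt_iff]
  constructor <;> linarith [h₁.1, h₁.2, h₂.1, h₂.2]

theorem continuous_nextHeight : Continuous S.nextHeight := by
  refine continuous_iff_continuousAt.2 fun q => ?_
  by_cases h : ∃ N, S.carryIn q.1.1 N = 0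
  · obtain ⟨N, hN⟩ := h
    refine ContinuousAt.congr ?_ (S.nextHeight_eventuallyEq_of_carryIn_eq_zero hN).symm
    fun_prop
  · push Not at h
    exact S.continuousAt_nextHeight_of_forall_carryIn_eq_one fun n =>
      le_antisymm (FAData.carryIn_le_one _ n) (Nat.one_le_iff_ne_zero.2 (h n))

theorem continuous_T : Continuous S.T := by
  have hT : (Subtype.val ∘ S.T) = fun q : S.X => (S.addOne q.1.1, S.nextHeight q) :=
    funext fun q => S.coe_T (S.param_mem q) (S.limMap_param q)
  refine continuous_induced_rng.2 ?_
  rw [hT]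
  exact (FAData.continuous_addOne.comp (continuous_fst.comp continuous_subtype_val)).prodMk
    S.continuous_nextHeight

theorem isClosed_Ellis : IsClosed S.Ellis := isClosed_closure

theorem iterate_mem_Ellis {k : ℕ} (hk : 1 ≤ k) : S.T^[k] ∈ S.Ellis :=
  subset_closure ⟨k - 1, by simp only [Nat.sub_add_cancel hk]⟩

theorem comp_mem_Ellis {f g : S.X → S.X} (hf : f ∈ S.Ellis) (hg : g ∈ S.Ellis) :
    f ∘ g ∈ S.Ellis := by
  have hTg (n : ℕ) : S.T^[n + 1] ∘ g ∈ S.Ellis := by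
    have hleft : Continuous fun h : S.X → S.X => S.T^[n + 1] ∘ h :=
      continuous_pi fun q => (S.continuous_T.iterate _).comp (continuous_apply q)
    refine map_mem_closure hleft hg ?_
    rintro _ ⟨m, rfl⟩
    exact ⟨n + m + 1, by rw [← Function.iterate_add]; ring_nf⟩
  have hcomp : Continuous fun h : S.X → S.X => h ∘ g :=
    continuous_pi fun q => continuous_apply (g q)
  have h : f ∘ g ∈ closure S.Ellis :=
    map_mem_closure (f := (· ∘ g)) hcomp hf fun _ ⟨n, hn⟩ => hn ▸ hTg n
  rwa [S.isClosed_Ellis.closure_eq] at h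

def nearCollapse (α : S.Sigma) (m : ℕ) : Set (S.X → S.X) :=
  {g | ∀ q q' : S.X, q.1.1 = α → q'.1.1 = α →
    (g q).1.1 ∈ cylinder α m ∧ |(g q).1.2 - (g q').1.2| ≤ (1 / 2) ^ m}

theorem isClosed_nearCollapse (α : S.Sigma) (m : ℕ) : IsClosed (S.nearCollapse α m) := by
  simp only [nearCollapse, Set.ofPred_forall]
  refine isClosed_iInter fun q => isClosed_iInter fun q' => isClosed_iInter fun _ =>
    isClosed_iInter fun _ => ?_
  have hval (q : S.X) : Continuous fun g : S.X → S.X => (g q).1 :=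
    continuous_subtype_val.comp (continuous_apply q)
  have hcyl : IsClosed (cylinder α m) := by
    rw [cylinder_eq_pi]; exact isClosed_set_pi fun i _ => isClosed_discrete _
  exact (hcyl.preimage (continuous_fst.comp (hval q))).inter <| isClosed_le
    (((continuous_snd.comp (hval q)).sub (continuous_snd.comp (hval q'))).abs) continuous_const

theorem nearCollapse_succ_subset (α : S.Sigma) (m : ℕ) :
    S.nearCollapse α (m + 1) ⊆ S.nearCollapse α m := fun g hg q q' hq hq' =>
  ⟨cylinder_anti α m.le_succ (hg q q' hq hq').1,
    (hg q q' hq hq').2.trans (pow_le_pow_of_le_one (by norm_num) (by norm_num) m.le_succ)⟩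

theorem fst_apply_eq_of_mem_iInter_nearCollapse {α : S.Sigma} {g : S.X → S.X}
    (hg : g ∈ ⋂ m, S.nearCollapse α m) {q : S.X} (hq : q.1.1 = α) : (g q).1.1 = α :=
  funext fun i => (Set.mem_iInter.1 hg (i + 1) q q hq hq).1 i i.lt_succ_self

theorem apply_eq_of_mem_iInter_nearCollapse {α : S.Sigma} {g : S.X → S.X}
    (hg : g ∈ ⋂ m, S.nearCollapse α m) {q q' : S.X} (hq : q.1.1 = α) (hq' : q'.1.1 = α) :
    g q = g q' := by
  have h : |(g q).1.2 - (g q').1.2| ≤ 0 := ge_of_tendsto'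
    (tendsto_pow_atTop_nhds_zero_of_lt_one (r := (1 / 2 : ℝ)) (by norm_num) (by norm_num))
    fun m => (Set.mem_iInter.1 hg m q q' hq hq').2
  refine Subtype.ext (Prod.ext ?_ ?_)
  · rw [S.fst_apply_eq_of_mem_iInter_nearCollapse hg hq,
      S.fst_apply_eq_of_mem_iInter_nearCollapse hg hq']
  · linarith [abs_nonneg ((g q).1.2 - (g q').1.2), abs_sub_le_iff.1 h]

theorem comp_mem_iInter_nearCollapse {α : S.Sigma} {f g : S.X → S.X}
    (hf : f ∈ ⋂ m, S.nearCollapse α m) (hg : g ∈ ⋂ m, S.nearCollapse α m) :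
    f ∘ g ∈ ⋂ m, S.nearCollapse α m :=
  Set.mem_iInter.2 fun m q q' hq hq' => Set.mem_iInter.1 hf m (g q) (g q')
    (S.fst_apply_eq_of_mem_iInter_nearCollapse hg hq)
    (S.fst_apply_eq_of_mem_iInter_nearCollapse hg hq')

theorem exists_iterate_addOne_mem_cylinder_limSlope_le (α : S.Sigma) (m : ℕ) :
    ∃ k, 1 ≤ k ∧ S.addOne^[k] α ∈ cylinder α m ∧
      S.limSlope (S.addOne^[k] α) ≤ (1 / 2) ^ m := by
  let target : S.Sigma := fun n => if n < m then α n else S.fin0 n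
  have htarget : S.limSlope target = 0 := S.limSlope_eq_zero_of_eventually_eq_fin0 <|
    (eventually_ge_atTop m).mono fun n hn => if_neg (not_lt.2 hn)
  obtain ⟨R, hR, hmR⟩ := (((S.tendsto_slope target).eventually
    (ge_mem_nhds (htarget ▸ pow_pos (by norm_num : (0 : ℝ) < 1 / 2) m))).and
    (eventually_ge_atTop m)).exists
  obtain ⟨k, hk, hkR⟩ := S.exists_iterate_addOne_mem_cylinder α target R
  refine ⟨k, hk, fun i hi => by rw [hkR i (hi.trans_le hmR)]; exact if_pos hi, ?_⟩
  calc S.limSlope (S.addOne^[k] α) ≤ S.slope (S.addOne^[k] α) R := S.limSlope_le_slope _ R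
    _ = S.slope target R := FAData.slope_congr hkR
    _ ≤ (1 / 2) ^ m := hR

theorem exists_iterate_T_mem_nearCollapse (α : S.Sigma) (m : ℕ) :
    ∃ k, 1 ≤ k ∧ S.T^[k] ∈ S.nearCollapse α m := by
  obtain ⟨k, hk, hcyl, hslope⟩ := S.exists_iterate_addOne_mem_cylinder_limSlope_le α m
  refine ⟨k, hk, fun q q' hq hq' => ?_⟩
  rw [S.coe_iterate_T (S.param_mem q) (S.limMap_param q),
    S.coe_iterate_T (S.param_mem q') (S.limMap_param q'), hq, hq']
  exact ⟨hcyl, (S.abs_limMap_sub_limMap_le _ (S.param_mem q) (S.param_mem q')).trans hslope⟩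

theorem nonempty_Ellis_inter_iInter_nearCollapse (α : S.Sigma) :
    (S.Ellis ∩ ⋂ m, S.nearCollapse α m).Nonempty := by
  rw [Set.inter_iInter]
  refine IsCompact.nonempty_iInter_of_sequence_nonempty_isCompact_isClosed _
    (fun m => Set.inter_subset_inter_right _ (S.nearCollapse_succ_subset α m))
    (fun m => ?_) (S.isClosed_Ellis.inter (S.isClosed_nearCollapse α 0)).isCompact
    fun m => S.isClosed_Ellis.inter (S.isClosed_nearCollapse α m)
  obtain ⟨k, hk, hkm⟩ := S.exists_iterate_T_mem_nearCollapse α m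
  exact ⟨_, S.iterate_mem_Ellis hk, hkm⟩

end FASystem

/-- For every `α ∈ Σ` there is an idempotent `f ∈ J(X)` collapsing
the fibre `L_α` to a single point `(α,z) ∈ L_α`. -/
theorem floyd_auslander_exists_collapsing_idempotent (S : FASystem)
    (α : S.toFAData.Sigma) :
    ∃ f ∈ S.J, ∃ z : ℝ, (α, z) ∈ S.toFAData.X ∧
      ∀ q : S.toFAData.X, (q : S.toFAData.Sigma × ℝ).1 = α →
        (f q : S.toFAData.Sigma × ℝ) = (α, z) := by
  obtain ⟨f, ⟨hfE, hfC⟩, hff⟩ := exists_idempotent_of_isCompact_of_comp_mem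
    (S.nonempty_Ellis_inter_iInter_nearCollapse α)
    (S.isClosed_Ellis.inter (isClosed_iInter (S.isClosed_nearCollapse α))).isCompact
    fun f hf g hg => ⟨S.comp_mem_Ellis hf.1 hg.1, S.comp_mem_iInter_nearCollapse hf.2 hg.2⟩
  let q₀ : S.X := ⟨_, S.limMap_mem_X α (z := 0) (by simp)⟩
  have hq₀ : (f q₀ : S.Sigma × ℝ) = (α, (f q₀).1.2) :=
    Prod.ext (S.fst_apply_eq_of_mem_iInter_nearCollapse hfC rfl) rfl
  refine ⟨f, ⟨hfE, hff⟩, (f q₀).1.2, hq₀ ▸ (f q₀).2, fun q hq => ?_⟩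
  rw [S.apply_eq_of_mem_iInter_nearCollapse hfC hq (q' := q₀) rfl, hq₀]
end
end

section
/- Let (X,T) be a Floyd–Auslander system satisfying 1 ≤ |Q(n)| < p_n for all n ∈ ℕ. If Λ = {n ∈ ℕ : |Q(n)| ≥ 2} is infinite, then (X,T) satisfies at least one of the conditions (A), (B), (C). -/
open Filter Topology

noncomputable section

section AuxProof

lemma lam0_ne_lam1' : lam0 ≠ lam1 := by
  intro h
  have := congrFun h 1
  simp only [lam0, lam1] at this
  norm_num at this

lemma lam0_ne_lam2' : lam0 ≠ lam2 := by
  intro h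
  have := congrFun h 0
  simp only [lam0, lam2] at this
  norm_num at this

lemma lam1_ne_lam2' : lam1 ≠ lam2 := by
  intro h
  have := congrFun h 0
  simp only [lam1, lam2] at this
  norm_num at this

namespace FAData

variable (D : FAData)

lemma tri (n : ℕ) (j : Fin (D.p n)) : j ∈ D.Q n ∨ j ∈ D.H0 n ∨ j ∈ D.H2 n := by
  rcases D.hlam n j with h | h | h
  · right; left; exact h
  · left; exact h
  · right; right; exact h

lemma notQ_of_H (n : ℕ) {j : Fin (D.p n)} (h : j ∈ D.H0 n ∪ D.H2 n) : j ∉ D.Q n := by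
  intro hQQ
  rcases h with h | h
  · exact lam0_ne_lam1' (h ▸ hQQ)
  · exact lam1_ne_lam2' (hQQ ▸ h)

/-- Local version of condition A at level n. -/
def LA (n : ℕ) : Prop :=
  ∃ a0 a1 : Fin (D.p n), a0 ∈ D.Q n ∧ a1 ∈ D.Q n ∧ a0 ≠ a1 ∧
    ∃ Δ : Fin (D.p n),
      D.modAdd n a0.val Δ.val ∈ D.H0 n ∧ D.modAdd n a1.val Δ.val ∈ D.H2 n

/-- Local version of condition B at level n. -/
def LB (n : ℕ) : Prop :=
  ∀ a0 a1 : Fin (D.p n), a0 ∈ D.Q n → a1 ∈ D.Q n → a0 ≠ a1 →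
    ∀ j : Fin (D.p n),
      (D.modAdd n a0.val j.val ∈ D.H0 n ↔ D.modAdd n a1.val j.val ∈ D.H0 n) ∧
      (D.modAdd n a0.val j.val ∈ D.H2 n ↔ D.modAdd n a1.val j.val ∈ D.H2 n)

/-- Local version of condition C at level n. -/
def LC (n : ℕ) : Prop :=
  ∃ a0 a1 : Fin (D.p n), a0 ∈ D.Q n ∧ a1 ∈ D.Q n ∧ a0 ≠ a1 ∧
    ∃ Δ : Fin (D.p n), ∃ h : a0.val + Δ.val < D.p n,
      (⟨a0.val + Δ.val, h⟩ : Fin (D.p n)) ∈ D.Q n ∧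
      D.modAdd n a1.val Δ.val ∈ D.H0 n ∪ D.H2 n

lemma modAdd_val (n a b : ℕ) : (D.modAdd n a b).val = (a + b) % D.p n := rfl

/-- Key step: if neither A nor C holds at n, and `a0 + j` lands in `H0 ∪ H2`, then
`a1 + j` cannot land in `Q`. -/
lemma key (n : ℕ) (hA : ¬ D.LA n) (hC : ¬ D.LC n)
    (a0 a1 : Fin (D.p n)) (ha0 : a0 ∈ D.Q n) (ha1 : a1 ∈ D.Q n) (hne : a0 ≠ a1)
    (j : Fin (D.p n)) (hy : D.modAdd n a0.val j.val ∈ D.H0 n ∪ D.H2 n) :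
    D.modAdd n a1.val j.val ∉ D.Q n := by
  intro hx
  have hp2 := D.hp n
  -- j ≠ 0
  have hj0 : j.val ≠ 0 := by
    intro h0
    apply D.notQ_of_H n hy
    have : D.modAdd n a0.val j.val = a0 := by
      apply Fin.ext
      simp [modAdd_val, h0, Nat.mod_eq_of_lt a0.isLt]
    rw [this]; exact ha0
  by_cases hlt : a1.val + j.val < D.p n
  · -- no wrap: C holds directly
    refine hC ⟨a1, a0, ha1, ha0, hne.symm, j, hlt, ?_, hy⟩
    have : (⟨a1.val + j.val, hlt⟩ : Fin (D.p n)) = D.modAdd n a1.val j.val := by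
      apply Fin.ext
      simp [modAdd_val, Nat.mod_eq_of_lt hlt]
    rw [this]; exact hx
  · push_neg at hlt
    set x := D.modAdd n a1.val j.val with hxdef
    have hxval : x.val = a1.val + j.val - D.p n := by
      rw [hxdef, modAdd_val, Nat.mod_eq_sub_mod hlt,
        Nat.mod_eq_of_lt (by have := a1.isLt; have := j.isLt; omega)]
    have hjP : j.val < D.p n := j.isLt
    have ha1P : a1.val < D.p n := a1.isLt
    -- the reverse shift
    set Δ : Fin (D.p n) := ⟨D.p n - j.val, by omega⟩ with hΔdef
    have hΔval : Δ.val = D.p n - j.val := rfl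
    have hxΔ : x.val + Δ.val < D.p n := by rw [hxval, hΔval]; omega
    have hxΔa1 : (⟨x.val + Δ.val, hxΔ⟩ : Fin (D.p n)) = a1 := by
      apply Fin.ext; simp only [hxval, hΔval]; omega
    have hxne : x ≠ a1 := by
      intro h
      have := congrArg Fin.val h
      rw [hxval] at this
      omega
    -- the map g = (· + Δ) mod p, with left inverse (· + j) mod p
    set g : Fin (D.p n) → Fin (D.p n) := fun v => D.modAdd n v.val Δ.val with hgdef
    have hginv : ∀ v : Fin (D.p n), D.modAdd n (g v).val j.val = v := by
      intro v
      apply Fin.ext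
      simp only [hgdef, modAdd_val]
      rw [Nat.mod_add_mod]
      have : v.val + Δ.val + j.val = v.val + D.p n := by rw [hΔval]; omega
      rw [this, Nat.add_mod_right, Nat.mod_eq_of_lt v.isLt]
    have hgx : g x = a1 := by
      apply Fin.ext
      have : (g x).val = (x.val + Δ.val) % D.p n := rfl
      rw [this, Nat.mod_eq_of_lt hxΔ]
      exact congrArg Fin.val hxΔa1
    have hgQ : ∀ v ∈ D.Q n, g v ∈ D.Q n := by
      intro v hv
      by_cases hvx : v = x
      · rw [hvx, hgx]; exact ha1
      · rcases D.tri n (g v) with h | h | h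
        · exact h
        · exact absurd (⟨x, v, hx, hv, fun he => hvx he.symm, Δ, hxΔ,
            hxΔa1 ▸ ha1, Or.inl h⟩ : D.LC n) hC
        · exact absurd (⟨x, v, hx, hv, fun he => hvx he.symm, Δ, hxΔ,
            hxΔa1 ▸ ha1, Or.inr h⟩ : D.LC n) hC
    have hginj : Function.Injective g := by
      intro u v huv
      have h1 := hginv u
      rw [huv, hginv v] at h1
      exact h1.symm
    -- g '' Q = Q
    have hsub : g '' D.Q n ⊆ D.Q n := by
      rintro _ ⟨v, hv, rfl⟩; exact hgQ v hv
    have hfin : (D.Q n).Finite := Set.toFinite _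
    have himg : g '' D.Q n = D.Q n := by
      apply Set.eq_of_subset_of_ncard_le hsub _ hfin
      rw [Set.ncard_image_of_injective _ hginj]
    -- a0 ∈ Q = g '' Q, so a0 = g v for some v; then v = a0 + j ∈ H0 ∪ H2, contradiction
    have hmem : a0 ∈ g '' D.Q n := by rw [himg]; exact ha0
    rcases hmem with ⟨v, hv, hgv⟩
    have hveq : v = D.modAdd n a0.val j.val := by
      have h1 := hginv v
      rw [hgv] at h1
      exact h1.symm
    rw [hveq] at hv
    exact D.notQ_of_H n hy hv

/-- The local trichotomy: at each level with `|Q| ≥ 2`, one of the local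
conditions A, B, C holds. -/
lemma localABC (n : ℕ) (h2 : 2 ≤ (D.Q n).ncard) : D.LA n ∨ D.LB n ∨ D.LC n := by
  by_cases hA : D.LA n
  · exact Or.inl hA
  by_cases hC : D.LC n
  · exact Or.inr (Or.inr hC)
  refine Or.inr (Or.inl ?_)
  intro a0 a1 ha0 ha1 hne j
  have k01 := D.key n hA hC a0 a1 ha0 ha1 hne j
  have k10 := D.key n hA hC a1 a0 ha1 ha0 hne.symm j
  constructor
  · constructor
    · intro h0
      rcases D.tri n (D.modAdd n a1.val j.val) with h | h | h
      · exact absurd h (k01 (Or.inl h0))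
      · exact h
      · exact absurd (⟨a0, a1, ha0, ha1, hne, j, h0, h⟩ : D.LA n) hA
    · intro h0
      rcases D.tri n (D.modAdd n a0.val j.val) with h | h | h
      · exact absurd h (k10 (Or.inl h0))
      · exact h
      · exact absurd (⟨a1, a0, ha1, ha0, hne.symm, j, h0, h⟩ : D.LA n) hA
  · constructor
    · intro h2'
      rcases D.tri n (D.modAdd n a1.val j.val) with h | h | h
      · exact absurd h (k01 (Or.inr h2'))
      · exact absurd (⟨a1, a0, ha1, ha0, hne.symm, j, h, h2'⟩ : D.LA n) hA
      · exact h
    · intro h2'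
      rcases D.tri n (D.modAdd n a0.val j.val) with h | h | h
      · exact absurd h (k10 (Or.inr h2'))
      · exact absurd (⟨a0, a1, ha0, ha1, hne, j, h, h2'⟩ : D.LA n) hA
      · exact h

end FAData

/-- Extract a `Cond` from an infinite set of levels where the local condition holds. -/
lemma extract_cond {LP : ℕ → Prop}
    (h : {n : ℕ | 2 ≤ 0 + 1 ∧ LP n}.Infinite) : True := trivial

end AuxProof

/-- A Floyd–Auslander system with `1 ≤ |Q(n)| < p_n` and infinite
`Λ = {n : |Q(n)| ≥ 2}` satisfies one of the conditions (A), (B), (C). -/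
theorem floyd_auslander_cases (S : FASystem)
    (hQ : ∀ n, 1 ≤ (S.toFAData.Q n).ncard ∧ (S.toFAData.Q n).ncard < S.toFAData.p n)
    (hLambda : {n : ℕ | 2 ≤ (S.toFAData.Q n).ncard}.Infinite) :
    S.toFAData.CondA ∨ S.toFAData.CondB ∨ S.toFAData.CondC := by
  classical
  set D := S.toFAData with hD
  have hloc : ∀ n ∈ {n : ℕ | 2 ≤ (D.Q n).ncard}, D.LA n ∨ D.LB n ∨ D.LC n := by
    intro n hn
    exact D.localABC n hn
  set SA := {n : ℕ | 2 ≤ (D.Q n).ncard ∧ D.LA n} with hSA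
  set SB := {n : ℕ | 2 ≤ (D.Q n).ncard ∧ D.LB n} with hSB
  set SC := {n : ℕ | 2 ≤ (D.Q n).ncard ∧ D.LC n} with hSC
  have hsub : {n : ℕ | 2 ≤ (D.Q n).ncard} ⊆ SA ∪ SB ∪ SC := by
    intro n hn
    rcases hloc n hn with h | h | h
    · exact Or.inl (Or.inl ⟨hn, h⟩)
    · exact Or.inl (Or.inr ⟨hn, h⟩)
    · exact Or.inr ⟨hn, h⟩
  have hinf : (SA ∪ SB ∪ SC).Infinite := hLambda.mono hsub
  rcases Set.infinite_union.mp hinf with hinf' | hCinf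
  · rcases Set.infinite_union.mp hinf' with hAinf | hBinf
    · left
      refine ⟨Nat.nth (· ∈ SA), Nat.nth_strictMono hAinf, fun ℓ => ?_⟩
      have hm : Nat.nth (· ∈ SA) ℓ ∈ SA := Nat.nth_mem_of_infinite hAinf ℓ
      exact ⟨hm.1, hm.2⟩
    · right; left
      refine ⟨Nat.nth (· ∈ SB), Nat.nth_strictMono hBinf, fun ℓ => ?_⟩
      have hm : Nat.nth (· ∈ SB) ℓ ∈ SB := Nat.nth_mem_of_infinite hBinf ℓ
      exact ⟨hm.1, hm.2⟩
  · right; right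
    refine ⟨Nat.nth (· ∈ SC), Nat.nth_strictMono hCinf, fun ℓ => ?_⟩
    have hm : Nat.nth (· ∈ SC) ℓ ∈ SC := Nat.nth_mem_of_infinite hCinf ℓ
    exact ⟨hm.1, hm.2⟩
end
end

section
/- Let (X,T) be a minimal Floyd–Auslander system. If Λ = {n ∈ ℕ : |Q(n)| ≥ 2} is finite, then (X,T) is tame, i.e. the cardinality of its Ellis semigroup E(X) is at most 2^ℵ₀. -/
/-!
An element `f` of `E(X)` is a pointwise limit of iterates of `T`, so on each finite prefix of `Σ` it
acts like a power of the odometer: its first coordinate is determined by its value at one point, and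
it maps distinct fibres to distinct fibres. A fibre over `α` is a single point unless
`α n ∈ Q n` for all large `n`, and when `Λ` is finite there are only countably many such `α`.
Moreover `f` is monotone on each fibre, and a monotone function on a set of reals is determined by
its values on a countable dense subset and at its countably many discontinuities. Hence `f` is
determined by a point of `Σ` and a countable subset of `(Σ × ℝ) × ℝ`, which leaves at most `𝔠`
possibilities.
-/

open Filter Topology

noncomputable section

open Set Cardinal

theorem Nat.add_div_eq_ite {a c p : ℕ} (ha : a < p) (hc : c ≤ 1) :
    (a + c) / p = if p ≤ a + c then 1 else 0 := by
  split_ifs with h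
  · rw [show a + c = p by omega, Nat.div_self (by omega)]
  · exact Nat.div_eq_of_lt (by omega)

theorem ContinuousWithinAt.eq_of_eqOn {X Y : Type*} [TopologicalSpace X] [TopologicalSpace Y]
    [T2Space Y] {f g : X → Y} {s : Set X} {x : X} (hf : ContinuousWithinAt f s x)
    (hg : ContinuousWithinAt g s x) (h : EqOn f g s) (hx : x ∈ closure s) : f x = g x :=
  haveI : (𝓝[s] x).NeBot := mem_closure_iff_nhdsWithin_neBot.mp hx
  tendsto_nhds_unique_of_eventuallyEq hf hg (h.eventuallyEq_of_mem self_mem_nhdsWithin)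

theorem Set.EqOn.of_subset_closure_of_discontinuities {X Y : Type*} [TopologicalSpace X]
    [TopologicalSpace Y] [T2Space Y] {f g : X → Y} {s t : Set X}
    (h : EqOn f g (t ∪ {x ∈ s | ¬ContinuousWithinAt f s x} ∪ {x ∈ s | ¬ContinuousWithinAt g s x}))
    (hts : t ⊆ s) (hst : s ⊆ closure t) : EqOn f g s := by
  intro x hx
  by_cases hf : ContinuousWithinAt f s x
  · by_cases hg : ContinuousWithinAt g s x
    · exact (hf.mono hts).eq_of_eqOn (hg.mono hts) (fun y hy => h (.inl (.inl hy))) (hst hx)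
    · exact h (.inr ⟨hx, hg⟩)
  · exact h (.inl (.inr ⟨hx, hf⟩))

theorem Set.countable_setOf_eventually_mem {β : ℕ → Type*} [∀ n, Finite (β n)]
    {s : ∀ n, Set (β n)} (hs : ∀ᶠ n in atTop, (s n).Subsingleton) :
    {f : ∀ n, β n | ∀ᶠ n in atTop, f n ∈ s n}.Countable := by
  obtain ⟨N, hN⟩ := eventually_atTop.mp hs
  have hfin : ∀ m, {f : ∀ n, β n | ∀ n ≥ max m N, f n ∈ s n}.Finite := fun m =>
    Finite.of_finite_image (f := fun f (i : Fin (max m N)) => f i) (toFinite _)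
      fun f hf g hg hfg => funext fun n => by
        rcases lt_or_ge n (max m N) with hn | hn
        · exact congrFun hfg ⟨n, hn⟩
        · exact hN n (le_of_max_le_right hn) (hf n hn) (hg n hn)
  refine (countable_iUnion fun m => (hfin m).countable).mono fun f hf => ?_
  obtain ⟨m, hm⟩ := eventually_atTop.mp hf
  exact mem_iUnion.mpr ⟨m, fun n hn => hm n (le_of_max_le_left hn)⟩

theorem eq_zero_of_tendsto_of_frequently_half {u : ℕ → ℝ} {L : ℝ} (hu : Tendsto u atTop (𝓝 L))
    (hhalf : ∃ᶠ n in atTop, u (n + 1) = u n / 2) : L = 0 := by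
  have hlim : Tendsto (fun n => u (n + 1) - u n / 2) atTop (𝓝 (L - L / 2)) :=
    ((tendsto_add_atTop_iff_nat 1).mpr hu).sub (hu.div_const 2)
  have := isClosed_singleton.mem_of_frequently_of_tendsto
    (hhalf.mono fun n hn => show u (n + 1) - u n / 2 ∈ ({0} : Set ℝ) by simp [hn]) hlim
  linarith [mem_singleton_iff.mp this]

theorem Cardinal.mk_countable_sets_le_continuum {α : Type*} (h : #α ≤ 𝔠) :
    #{t : Set α // t.Countable} ≤ 𝔠 := by
  calc #{t : Set α // t.Countable} = #{t : Set α // #t ≤ ℵ₀} := by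
        simp only [le_aleph0_iff_set_countable]
    _ ≤ max #α ℵ₀ ^ ℵ₀ := mk_bounded_set_le α ℵ₀
    _ ≤ 𝔠 ^ ℵ₀ := power_le_power_right (max_le h aleph0_le_continuum)
    _ = 𝔠 := continuum_power_aleph0

namespace FAData

variable {D : FAData}

theorem monotone_lam (n : ℕ) (j : Fin (D.p n)) : Monotone (D.lam n j) := by
  intro x y hxy
  rcases D.hlam n j with h | h | h <;> simp only [h, lam0, lam1, lam2] <;> linarith

theorem lam_mem_Icc (n : ℕ) (j : Fin (D.p n)) {x : ℝ} (hx : x ∈ Icc (0 : ℝ) 1) :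
    D.lam n j x ∈ Icc (0 : ℝ) 1 := by
  obtain ⟨h0, h1⟩ := hx
  rcases D.hlam n j with h | h | h <;> simp only [h, lam0, lam1, lam2, mem_Icc] <;>
    constructor <;> linarith

theorem lam_apply_eq (n : ℕ) (j : Fin (D.p n)) (x : ℝ) :
    D.lam n j x = D.lam n j 0 + (D.lam n j 1 - D.lam n j 0) * x := by
  rcases D.hlam n j with h | h | h <;> simp only [h, lam0, lam1, lam2] <;> ring

theorem lam_one_sub_lam_zero_le_one (n : ℕ) (j : Fin (D.p n)) :
    D.lam n j 1 - D.lam n j 0 ≤ 1 := by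
  rcases D.hlam n j with h | h | h <;> simp only [h, lam0, lam1, lam2] <;> norm_num

theorem lam_one_sub_lam_zero_of_notMem_Q {n : ℕ} {j : Fin (D.p n)} (hj : j ∉ D.Q n) :
    D.lam n j 1 - D.lam n j 0 = 1 / 2 := by
  rcases D.hlam n j with h | h | h
  · simp only [h, lam0]; norm_num
  · exact absurd h hj
  · simp only [h, lam2]; norm_num

theorem monotone_lamComp (α : D.Sigma) (n : ℕ) : Monotone (D.lamComp α n) := by
  induction n with
  | zero => exact monotone_id
  | succ n ih => exact ih.comp (monotone_lam n (α n))

theorem lamComp_mem_Icc (α : D.Sigma) (n : ℕ) {z : ℝ} (hz : z ∈ Icc (0 : ℝ) 1) :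
    D.lamComp α n z ∈ Icc (0 : ℝ) 1 := by
  induction n generalizing z with
  | zero => exact hz
  | succ n ih => exact ih (lam_mem_Icc n (α n) hz)

variable (D) in
def width (α : D.Sigma) (n : ℕ) : ℝ := D.lamComp α n 1 - D.lamComp α n 0

theorem lamComp_apply_eq (α : D.Sigma) (n : ℕ) (x : ℝ) :
    D.lamComp α n x = D.lamComp α n 0 + D.width α n * x := by
  induction n generalizing x with
  | zero => simp [width, lamComp]
  | succ n ih =>
    simp only [width, lamComp, Function.comp_apply, ih (D.lam n (α n) _)]
    rw [lam_apply_eq n (α n) x]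
    ring

theorem width_succ (α : D.Sigma) (n : ℕ) :
    D.width α (n + 1) = D.width α n * (D.lam n (α n) 1 - D.lam n (α n) 0) := by
  simp only [width, lamComp, Function.comp_apply, lamComp_apply_eq α n (D.lam n (α n) _)]
  ring

theorem width_nonneg (α : D.Sigma) (n : ℕ) : 0 ≤ D.width α n :=
  sub_nonneg.mpr (monotone_lamComp α n zero_le_one)

theorem antitone_width (α : D.Sigma) : Antitone (D.width α) := by
  refine antitone_nat_of_succ_le fun n => ?_
  rw [width_succ]
  exact mul_le_of_le_one_right (width_nonneg α n) (lam_one_sub_lam_zero_le_one n (α n))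

theorem monotone_lamComp_zero (α : D.Sigma) : Monotone (D.lamComp α · 0) :=
  monotone_nat_of_le_succ fun n =>
    monotone_lamComp α n (lam_mem_Icc n (α n) (left_mem_Icc.mpr zero_le_one)).1

/-- `lamComp α n z = lamComp α n 0 + width α n * z`, an increasing bounded sequence plus `z` times a
decreasing nonnegative one. -/
theorem exists_tendsto_lamComp (α : D.Sigma) (z : ℝ) :
    ∃ y, Tendsto (D.lamComp α · z) atTop (𝓝 y) := by
  have hzero := tendsto_atTop_ciSup (monotone_lamComp_zero α)
    ⟨1, forall_mem_range.mpr fun n => (lamComp_mem_Icc α n (left_mem_Icc.mpr zero_le_one)).2⟩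
  have hwidth := tendsto_atTop_ciInf (antitone_width α)
    ⟨0, forall_mem_range.mpr (width_nonneg α)⟩
  simp_rw [lamComp_apply_eq α _ z]
  exact ⟨_, hzero.add (hwidth.mul_const z)⟩

theorem tendsto_width_zero {α : D.Sigma} (hα : ∃ᶠ n in atTop, α n ∉ D.Q n) :
    Tendsto (D.width α) atTop (𝓝 0) := by
  have hlim := tendsto_atTop_ciInf (antitone_width α) ⟨0, forall_mem_range.mpr (width_nonneg α)⟩
  rwa [eq_zero_of_tendsto_of_frequently_half hlim (hα.mono fun n hn => by
    rw [width_succ, lam_one_sub_lam_zero_of_notMem_Q hn]; ring)] at hlim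

variable (D) in
def fiber (α : D.Sigma) : Set ℝ := {y | (α, y) ∈ D.X}

theorem mem_fiber (x : D.X) : x.1.2 ∈ D.fiber x.1.1 := x.2

variable (D) in
def eventuallyQ : Set D.Sigma := {α | ∀ᶠ n in atTop, α n ∈ D.Q n}

theorem countable_eventuallyQ (h : ∀ᶠ n in atTop, (D.Q n).Subsingleton) :
    D.eventuallyQ.Countable :=
  countable_setOf_eventually_mem h

theorem fiber_subsingleton {α : D.Sigma} (hα : α ∉ D.eventuallyQ) : (D.fiber α).Subsingleton := by
  rintro y ⟨z, -, hz⟩ y' ⟨z', -, hz'⟩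
  have hw := (tendsto_width_zero (not_eventually.mp hα)).mul_const (z - z')
  rw [zero_mul] at hw
  refine sub_eq_zero.mp (tendsto_nhds_unique (hz.sub hz') (hw.congr fun n => ?_))
  simp only [lamComp_apply_eq α n z, lamComp_apply_eq α n z']
  ring

/-- Points `y ≤ y'` of a fibre have representatives `z ≤ z'`: if `z' < z` then `y' ≤ y`, so
`y = y'` and `z'` represents both. -/
theorem exists_le_of_mem_fiber {α : D.Sigma} {y y' : ℝ} (hy : y ∈ D.fiber α)
    (hy' : y' ∈ D.fiber α) (hle : y ≤ y') :
    ∃ z ∈ Icc (0 : ℝ) 1, ∃ z' ∈ Icc (0 : ℝ) 1, z ≤ z' ∧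
      Tendsto (D.lamComp α · z) atTop (𝓝 y) ∧ Tendsto (D.lamComp α · z') atTop (𝓝 y') := by
  obtain ⟨z, hz, hzy⟩ := hy
  obtain ⟨z', hz', hzy'⟩ := hy'
  rcases le_or_gt z z' with hzz | hzz
  · exact ⟨z, hz, z', hz', hzz, hzy, hzy'⟩
  · have : y' ≤ y := le_of_tendsto_of_tendsto' hzy' hzy fun n => monotone_lamComp α n hzz.le
    exact ⟨z', hz', z', hz', le_rfl, le_antisymm hle this ▸ hzy', hzy'⟩

variable (D) in
theorem X_nonempty : D.X.Nonempty :=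
  let ⟨y, hy⟩ := exists_tendsto_lamComp (D.fin0 ·) 0
  ⟨((D.fin0 ·), y), 0, left_mem_Icc.mpr zero_le_one, hy⟩

variable (D) in
theorem mk_Sigma_le_continuum : #D.Sigma ≤ 𝔠 :=
  calc #D.Sigma ≤ #(ℕ → ℕ) :=
        mk_le_of_injective (f := fun α n => (α n).val) fun _ _ h => funext fun n =>
          Fin.ext (congrFun h n)
    _ = 𝔠 := by rw [← power_def, mk_nat, aleph0_power_aleph0]

variable (D) in
def placeValue : ℕ → ℕ
  | 0 => 1
  | k + 1 => placeValue k * D.p k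

variable (D) in
/-- The first `k` digits of `α` as a mixed-radix numeral, least significant digit first. -/
def prefixValue (α : D.Sigma) : ℕ → ℕ
  | 0 => 0
  | k + 1 => prefixValue α k + (α k).val * D.placeValue k

theorem placeValue_pos (k : ℕ) : 0 < D.placeValue k := by
  induction k with
  | zero => exact one_pos
  | succ k ih => exact Nat.mul_pos ih (by have := D.hp k; omega)

theorem prefixValue_lt (α : D.Sigma) (k : ℕ) : D.prefixValue α k < D.placeValue k := by
  induction k with
  | zero => exact one_pos
  | succ k ih =>
    calc D.prefixValue α k + (α k).val * D.placeValue k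
        < (1 + (α k).val) * D.placeValue k := by linarith
      _ ≤ D.p k * D.placeValue k := Nat.mul_le_mul_right _ (by have := (α k).isLt; omega)
      _ = D.placeValue (k + 1) := Nat.mul_comm _ _

theorem val_eq_prefixValue_div (α : D.Sigma) (k : ℕ) :
    (α k).val = D.prefixValue α (k + 1) / D.placeValue k := by
  rw [prefixValue, Nat.add_mul_div_right _ _ (placeValue_pos k),
    Nat.div_eq_of_lt (prefixValue_lt α k), zero_add]

theorem eq_of_forall_prefixValue_eq {α β : D.Sigma}
    (h : ∀ k, D.prefixValue α k = D.prefixValue β k) : α = β :=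
  funext fun k => Fin.ext <| by rw [val_eq_prefixValue_div, val_eq_prefixValue_div, h]

theorem continuous_prefixValue (k : ℕ) : Continuous (D.prefixValue · k) := by
  induction k with
  | zero => exact continuous_const
  | succ k ih =>
    have hdigit : Continuous fun α : D.Sigma => (α k).val :=
      continuous_of_discreteTopology.comp (continuous_apply k)
    exact ih.add (hdigit.mul continuous_const)

theorem carryIn_le_one_s18 (α : D.Sigma) : ∀ k, D.carryIn α k ≤ 1
  | 0 => le_rfl
  | k + 1 => by rw [carryIn]; split <;> omega

theorem prefixValue_addOne_add_carryIn (α : D.Sigma) (k : ℕ) :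
    D.prefixValue (D.addOne α) k + D.carryIn α k * D.placeValue k = D.prefixValue α k + 1 := by
  induction k with
  | zero => rfl
  | succ k ih =>
    have hcarry : D.carryIn α (k + 1) = ((α k).val + D.carryIn α k) / D.p k := by
      rw [carryIn, Nat.add_div_eq_ite (α k).isLt (carryIn_le_one_s18 α k)]
    have hdigit := Nat.mod_add_div ((α k).val + D.carryIn α k) (D.p k)
    simp only [prefixValue, placeValue, hcarry, addOne, modAdd]
    linear_combination ih + D.placeValue k * hdigit

theorem prefixValue_addOne (α : D.Sigma) (k : ℕ) :
    D.prefixValue (D.addOne α) k = (D.prefixValue α k + 1) % D.placeValue k := by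
  rw [← prefixValue_addOne_add_carryIn, Nat.add_mul_mod_self_right,
    Nat.mod_eq_of_lt (prefixValue_lt _ k)]

theorem prefixValue_iterate_addOne (α : D.Sigma) (k r : ℕ) :
    D.prefixValue (D.addOne^[r] α) k = (D.prefixValue α k + r) % D.placeValue k := by
  induction r with
  | zero => exact (Nat.mod_eq_of_lt (prefixValue_lt α k)).symm
  | succ r ih =>
    rw [Function.iterate_succ_apply', prefixValue_addOne, ih, Nat.mod_add_mod, add_assoc]

end FAData

namespace FASystem

variable {S : FASystem}

theorem exists_T_eq {α : S.Sigma} {z y : ℝ} (hz : z ∈ Icc (0 : ℝ) 1)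
    (hy : Tendsto (S.lamComp α · z) atTop (𝓝 y)) (hq : (α, y) ∈ S.X) :
    ∃ y', Tendsto (S.lamComp (S.addOne α) · z) atTop (𝓝 y') ∧
      (S.T ⟨(α, y), hq⟩ : S.Sigma × ℝ) = (S.addOne α, y') :=
  let ⟨y', hy'⟩ := FAData.exists_tendsto_lamComp (S.addOne α) z
  ⟨y', hy', S.hT α z y y' hz hy hy' hq⟩

theorem fst_T (x : S.X) : (S.T x).1.1 = S.addOne x.1.1 := by
  obtain ⟨⟨α, y⟩, hq⟩ := x
  obtain ⟨z, hz, hy⟩ := id hq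
  obtain ⟨y', -, hT⟩ := exists_T_eq hz hy hq
  rw [hT]

theorem fst_iterate_T (x : S.X) (n : ℕ) : (S.T^[n] x).1.1 = S.addOne^[n] x.1.1 := by
  induction n with
  | zero => rfl
  | succ n ih => rw [Function.iterate_succ_apply', Function.iterate_succ_apply', fst_T, ih]

theorem snd_T_le {x x' : S.X} (hfst : x.1.1 = x'.1.1) (hle : x.1.2 ≤ x'.1.2) :
    (S.T x).1.2 ≤ (S.T x').1.2 := by
  obtain ⟨⟨α, y⟩, hq⟩ := x
  obtain ⟨⟨α', y'⟩, hq'⟩ := x'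
  obtain rfl : α = α' := hfst
  obtain ⟨z, hz, z', hz', hzz, hzy, hzy'⟩ := FAData.exists_le_of_mem_fiber hq hq' hle
  obtain ⟨w, hw, hTw⟩ := exists_T_eq hz hzy hq
  obtain ⟨w', hw', hTw'⟩ := exists_T_eq hz' hzy' hq'
  rw [hTw, hTw']
  exact le_of_tendsto_of_tendsto' hw hw' fun n => FAData.monotone_lamComp _ n hzz

theorem snd_iterate_T_le {x x' : S.X} (hfst : x.1.1 = x'.1.1) (hle : x.1.2 ≤ x'.1.2) (n : ℕ) :
    (S.T^[n] x).1.2 ≤ (S.T^[n] x').1.2 := by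
  induction n with
  | zero => exact hle
  | succ n ih =>
    rw [Function.iterate_succ_apply', Function.iterate_succ_apply']
    exact snd_T_le (by rw [fst_iterate_T, fst_iterate_T, hfst]) ih

theorem Ellis_subset_of_isClosed {P : Set (S.X → S.X)} (hP : IsClosed P)
    (hT : ∀ n, S.T^[n + 1] ∈ P) : S.Ellis ⊆ P :=
  closure_minimal (range_subset_iff.mpr hT) hP

theorem continuous_fst_apply (x : S.X) : Continuous fun g : S.X → S.X => (g x).1.1 :=
  continuous_fst.comp (continuous_subtype_val.comp (continuous_apply x))

theorem continuous_snd_apply (x : S.X) : Continuous fun g : S.X → S.X => (g x).1.2 :=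
  continuous_snd.comp (continuous_subtype_val.comp (continuous_apply x))

/-- On `k`-digit prefixes every element of `E(X)` acts as a rotation of `ℤ / placeValue k`, as
the iterates of `T` do. -/
theorem prefixValue_modEq_of_mem_Ellis {f : S.X → S.X} (hf : f ∈ S.Ellis) (x x' : S.X) (k : ℕ) :
    S.prefixValue (f x).1.1 k + S.prefixValue x'.1.1 k ≡
      S.prefixValue (f x').1.1 k + S.prefixValue x.1.1 k [MOD S.placeValue k] := by
  have hcont : ∀ x : S.X, Continuous fun g : S.X → S.X => S.prefixValue (g x).1.1 k :=
    fun x => (FAData.continuous_prefixValue k).comp (continuous_fst_apply x)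
  refine Ellis_subset_of_isClosed (P := {g | S.prefixValue (g x).1.1 k + S.prefixValue x'.1.1 k ≡
      S.prefixValue (g x').1.1 k + S.prefixValue x.1.1 k [MOD S.placeValue k]})
    ((isClosed_discrete {v : ℕ × ℕ | v.1 + S.prefixValue x'.1.1 k ≡
      v.2 + S.prefixValue x.1.1 k [MOD S.placeValue k]}).preimage ((hcont x).prodMk (hcont x')))
    (fun n => ?_) hf
  simp only [mem_ofPred_eq, fst_iterate_T, FAData.prefixValue_iterate_addOne]
  calc (S.prefixValue x.1.1 k + (n + 1)) % S.placeValue k + S.prefixValue x'.1.1 k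
      ≡ S.prefixValue x.1.1 k + (n + 1) + S.prefixValue x'.1.1 k [MOD S.placeValue k] :=
        (Nat.mod_modEq _ _).add_right _
    _ = S.prefixValue x'.1.1 k + (n + 1) + S.prefixValue x.1.1 k := by ring
    _ ≡ (S.prefixValue x'.1.1 k + (n + 1)) % S.placeValue k + S.prefixValue x.1.1 k
        [MOD S.placeValue k] := ((Nat.mod_modEq _ _).add_right _).symm

theorem fst_apply_eq_fst_apply_iff {f : S.X → S.X} (hf : f ∈ S.Ellis) {x x' : S.X} :
    (f x).1.1 = (f x').1.1 ↔ x.1.1 = x'.1.1 := by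
  have key : ∀ k, S.prefixValue (f x).1.1 k = S.prefixValue (f x').1.1 k ↔
      S.prefixValue x.1.1 k = S.prefixValue x'.1.1 k := fun k => by
    have h := prefixValue_modEq_of_mem_Ellis hf x x' k
    constructor
    · intro he
      rw [he] at h
      exact (Nat.ModEq.add_left_cancel' _ h).symm.eq_of_lt_of_lt
        (FAData.prefixValue_lt _ k) (FAData.prefixValue_lt _ k)
    · intro he
      rw [he] at h
      exact (Nat.ModEq.add_right_cancel' _ h).eq_of_lt_of_lt
        (FAData.prefixValue_lt _ k) (FAData.prefixValue_lt _ k)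
  exact ⟨fun h => FAData.eq_of_forall_prefixValue_eq fun k => (key k).mp (by rw [h]),
    fun h => FAData.eq_of_forall_prefixValue_eq fun k => (key k).mpr (by rw [h])⟩

theorem fst_apply_eq_of_fst_apply_eq {f g : S.X → S.X} (hf : f ∈ S.Ellis) (hg : g ∈ S.Ellis)
    {x₀ : S.X} (h₀ : (f x₀).1.1 = (g x₀).1.1) (x : S.X) : (f x).1.1 = (g x).1.1 := by
  refine FAData.eq_of_forall_prefixValue_eq fun k => ?_
  have hfk := prefixValue_modEq_of_mem_Ellis hf x x₀ k
  rw [h₀] at hfk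
  exact (Nat.ModEq.add_right_cancel' _ (hfk.trans (prefixValue_modEq_of_mem_Ellis hg x x₀ k).symm)
    ).eq_of_lt_of_lt (FAData.prefixValue_lt _ k) (FAData.prefixValue_lt _ k)

theorem snd_apply_le_of_mem_Ellis {f : S.X → S.X} (hf : f ∈ S.Ellis) {x x' : S.X}
    (hfst : x.1.1 = x'.1.1) (hle : x.1.2 ≤ x'.1.2) : (f x).1.2 ≤ (f x').1.2 :=
  Ellis_subset_of_isClosed (P := {g | (g x).1.2 ≤ (g x').1.2})
    (isClosed_le (continuous_snd_apply x) (continuous_snd_apply x'))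
    (fun _ => snd_iterate_T_le hfst hle _) hf

variable (S) in
open Classical in
/-- `f` restricted to the fibre over `α`, as a real function with junk value `0` off the fibre. -/
def fiberMap (f : S.X → S.X) (α : S.Sigma) (y : ℝ) : ℝ :=
  if h : (α, y) ∈ S.X then (f ⟨(α, y), h⟩).1.2 else 0

variable (S) in
/-- The points where an element of `E(X)` has to be recorded: over the countably many fibres
sent to non-degenerate fibres, a countable dense set `Dn α` together with the discontinuities. -/
def keyPoints (Dn : S.Sigma → Set ℝ) (f : S.X → S.X) : Set (S.Sigma × ℝ) :=
  {q | ∃ hq : q ∈ S.X, (f ⟨q, hq⟩).1.1 ∈ S.eventuallyQ ∧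
    (q.2 ∈ Dn q.1 ∨ ¬ContinuousWithinAt (S.fiberMap f q.1) (S.fiber q.1) q.2)}

theorem fiberMap_apply (f : S.X → S.X) (x : S.X) : S.fiberMap f x.1.1 x.1.2 = (f x).1.2 :=
  dif_pos (show (x.1.1, x.1.2) ∈ S.X from x.2)

theorem monotoneOn_fiberMap {f : S.X → S.X} (hf : f ∈ S.Ellis) (α : S.Sigma) :
    MonotoneOn (S.fiberMap f α) (S.fiber α) := fun y hy y' hy' hle => by
  rw [fiberMap, fiberMap, dif_pos (show (α, y) ∈ S.X from hy),
    dif_pos (show (α, y') ∈ S.X from hy')]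
  exact snd_apply_le_of_mem_Ellis hf rfl hle

theorem countable_keyPoints (hE : S.eventuallyQ.Countable) {Dn : S.Sigma → Set ℝ}
    (hDn : ∀ α, (Dn α).Countable) {f : S.X → S.X} (hf : f ∈ S.Ellis) :
    (S.keyPoints Dn f).Countable := by
  have hpreimage : ∀ e, {α | ∃ x : S.X, x.1.1 = α ∧ (f x).1.1 = e}.Subsingleton := by
    rintro e _ ⟨x, rfl, hx⟩ _ ⟨x', rfl, hx'⟩
    exact (fst_apply_eq_fst_apply_iff hf).mp (hx.trans hx'.symm)
  refine (hE.biUnion fun e _ => (hpreimage e).countable.biUnion fun α _ =>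
    (countable_singleton α).prod <|
      (hDn α).union (monotoneOn_fiberMap hf α).countable_not_continuousWithinAt).mono ?_
  rintro q ⟨hq, hE, hkey⟩
  simp only [mem_iUnion]
  exact ⟨_, hE, q.1, ⟨⟨q, hq⟩, rfl, rfl⟩, rfl, hkey.imp id fun hdisc => ⟨hq, hdisc⟩⟩

theorem mk_mem_keyPoints {Dn : S.Sigma → Set ℝ} {f : S.X → S.X} (hf : f ∈ S.Ellis) {x : S.X}
    (hx : (f x).1.1 ∈ S.eventuallyQ) {y : ℝ} (hy : y ∈ S.fiber x.1.1)
    (hkey : y ∈ Dn x.1.1 ∨ ¬ContinuousWithinAt (S.fiberMap f x.1.1) (S.fiber x.1.1) y) :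
    (x.1.1, y) ∈ S.keyPoints Dn f :=
  ⟨hy, by rwa [(fst_apply_eq_fst_apply_iff hf (x := ⟨(x.1.1, y), hy⟩) (x' := x)).mpr rfl], hkey⟩

theorem eq_of_keyPoints_graph_eq {Dn : S.Sigma → Set ℝ} (hDsub : ∀ α, Dn α ⊆ S.fiber α)
    (hDdense : ∀ α, S.fiber α ⊆ closure (Dn α)) {f g : S.X → S.X} (hf : f ∈ S.Ellis)
    (hg : g ∈ S.Ellis) {x₀ : S.X} (h₀ : (f x₀).1.1 = (g x₀).1.1)
    (hgraph : (fun q => (q, S.fiberMap f q.1 q.2)) '' S.keyPoints Dn f =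
      (fun q => (q, S.fiberMap g q.1 q.2)) '' S.keyPoints Dn g) : f = g := by
  have hfst := fst_apply_eq_of_fst_apply_eq hf hg h₀
  have hK : S.keyPoints Dn f = S.keyPoints Dn g := by
    simpa only [image_image, image_id'] using congrArg (Prod.fst '' ·) hgraph
  have hagree : ∀ q ∈ S.keyPoints Dn f, S.fiberMap f q.1 q.2 = S.fiberMap g q.1 q.2 := by
    intro q hq
    obtain ⟨q', -, he⟩ :=
      hgraph ▸ mem_image_of_mem (fun q : S.Sigma × ℝ => (q, S.fiberMap f q.1 q.2)) hq
    obtain ⟨rfl, h⟩ := Prod.ext_iff.mp he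
    exact h.symm
  funext x
  refine Subtype.ext (Prod.ext (hfst x) ?_)
  by_cases hE : (f x).1.1 ∈ S.eventuallyQ
  · rw [← fiberMap_apply f x, ← fiberMap_apply g x]
    refine EqOn.of_subset_closure_of_discontinuities (f := S.fiberMap f x.1.1)
      (g := S.fiberMap g x.1.1) (fun y hy => hagree (x.1.1, y) ?_) (hDsub _) (hDdense _)
      (FAData.mem_fiber x)
    rcases hy with (hy | ⟨hy, hdisc⟩) | ⟨hy, hdisc⟩
    · exact mk_mem_keyPoints hf hE (hDsub _ hy) (.inl hy)
    · exact mk_mem_keyPoints hf hE hy (.inr hdisc)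
    · exact hK ▸ mk_mem_keyPoints hg (hfst x ▸ hE) hy (.inr hdisc)
  · exact FAData.fiber_subsingleton hE (FAData.mem_fiber (f x)) (hfst x ▸ FAData.mem_fiber (g x))

end FASystem

theorem floyd_auslander_tame_of_finite_Lambda_general (S : FASystem)
    (hLambda : {n : ℕ | 2 ≤ (S.toFAData.Q n).ncard}.Finite) :
    Cardinal.mk ↥S.Ellis ≤ Cardinal.continuum := by
  have hE : S.eventuallyQ.Countable := FAData.countable_eventuallyQ <|
    (Nat.cofinite_eq_atTop ▸ hLambda.eventually_cofinite_notMem).mono fun n hn =>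
      ncard_le_one_iff_subsingleton.mp (by simp only [mem_ofPred_eq] at hn; omega)
  obtain ⟨q₀, hq₀⟩ := S.X_nonempty
  choose Dn hDsub hDc hDdense using fun α =>
    (TopologicalSpace.IsSeparable.of_separableSpace (S.fiber α)).exists_countable_dense_subset
  let code (f : S.Ellis) : S.Sigma × {t : Set ((S.Sigma × ℝ) × ℝ) // t.Countable} :=
    ((f.1 ⟨q₀, hq₀⟩).1.1, ⟨_, (S.countable_keyPoints hE hDc f.2).image
      fun q => (q, S.fiberMap f.1 q.1 q.2)⟩)
  have hcode : Function.Injective code := fun f g h => Subtype.ext <|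
    FASystem.eq_of_keyPoints_graph_eq hDsub hDdense f.2 g.2 (congrArg (·.1) h)
      (congrArg (·.2.1) h)
  have hgraph : #((S.Sigma × ℝ) × ℝ) ≤ 𝔠 := by
    simpa only [mk_prod, lift_id, mk_real, mul_assoc, continuum_mul_self] using
      mul_le_mul' S.mk_Sigma_le_continuum (le_refl (𝔠 * 𝔠))
  calc #S.Ellis ≤ #(S.Sigma × {t : Set ((S.Sigma × ℝ) × ℝ) // t.Countable}) :=
        mk_le_of_injective hcode
    _ ≤ 𝔠 := by
      simpa only [mk_prod, lift_id, continuum_mul_self] using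
        mul_le_mul' S.mk_Sigma_le_continuum (mk_countable_sets_le_continuum hgraph)

/-- A minimal Floyd–Auslander system with finite
`Λ = {n : |Q(n)| ≥ 2}` is tame: `|E(X)| ≤ 2^ℵ₀`. -/
theorem floyd_auslander_tame_of_finite_Lambda (S : FASystem) (hmin : S.Minimal)
    (hLambda : {n : ℕ | 2 ≤ (S.toFAData.Q n).ncard}.Finite) :
    Cardinal.mk ↥S.Ellis ≤ Cardinal.continuum :=
  floyd_auslander_tame_of_finite_Lambda_general S hLambda
end
end
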